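/- arXiv:2206.03728 — 3 statements merged into one kernel-verified Lean document; each statement's English description precedes it below -/
import Mathlib

section
/- If x : ℝ → ℝⁿ solves the quadratic system ẋᵢ = xᵀAᵢx + vᵢᵀx where Aᵢ = wᵢB - B(w eᵢᵀ) - (eᵢ wᵀ)B and V (rows vᵢᵀ) satisfies VᵀB + BV = λB, then b(t) := x(t)ᵀBx(t) satisfies ḃ = b(λ - 2wᵀBx). -/
/-!
For symmetric `B`, the quadratic part of the vector field is `xᵢ ↦ b wᵢ - 2 (wᵀBx) xᵢ`, so
along a solution `ẋ = b w - 2 (wᵀBx) x + Vx`. Differentiating `b = xᵀBx` gives `ẋᵀBx + xᵀBẋ`: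
the first two terms of `ẋ` contribute `2 b (wᵀBx) - 4 (wᵀBx) b`, and the linear term contributes
`xᵀ(VᵀB + BV)x = λ b`.
-/

open Matrix

namespace Matrix

variable {ι R : Type*} [Fintype ι] [CommRing R]

theorem IsSymm.dotProduct_mulVec_comm {B : Matrix ι ι R} (hB : B.IsSymm) (u y : ι → R) :
    u ⬝ᵥ B *ᵥ y = y ⬝ᵥ B *ᵥ u := by
  rw [dotProduct_mulVec, ← mulVec_transpose, hB.eq, dotProduct_comm]

theorem IsSymm.dotProduct_mulVec_smul_sub_mul_vecMulVec_sub_vecMulVec_mul [DecidableEq ι]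
    {B : Matrix ι ι R} (hB : B.IsSymm) (w y : ι → R) (i : ι) :
    y ⬝ᵥ (w i • B - B * vecMulVec w (Pi.single i 1) - vecMulVec (Pi.single i 1) w * B) *ᵥ y
      = (y ⬝ᵥ B *ᵥ y) * w i - 2 * (w ⬝ᵥ B *ᵥ y) * y i := by
  simp only [sub_mulVec, smul_mulVec, ← mulVec_mulVec, vecMulVec_mulVec, op_smul_eq_smul,
    mulVec_smul, dotProduct_sub, dotProduct_smul, dotProduct_single_one, single_one_dotProduct,
    smul_eq_mul, hB.dotProduct_mulVec_comm y w]
  ring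

theorem mulVec_dotProduct_mulVec_add_dotProduct_mulVec_mulVec {B V : Matrix ι ι R} {l : R}
    (hV : Vᵀ * B + B * V = l • B) (y : ι → R) :
    (V *ᵥ y) ⬝ᵥ B *ᵥ y + y ⬝ᵥ B *ᵥ (V *ᵥ y) = l * (y ⬝ᵥ B *ᵥ y) := by
  rw [mulVec_mulVec, ← vecMul_transpose, ← dotProduct_mulVec, mulVec_mulVec, ← dotProduct_add,
    ← add_mulVec, hV, smul_mulVec, dotProduct_smul, smul_eq_mul]

theorem IsSymm.dotProduct_mulVec_add_dotProduct_mulVec_eq {B V : Matrix ι ι R} (hB : B.IsSymm)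
    {l : R} (hV : Vᵀ * B + B * V = l • B) (w y : ι → R) {d : ι → R}
    (hd : d = (y ⬝ᵥ B *ᵥ y) • w - (2 * (w ⬝ᵥ B *ᵥ y)) • y + V *ᵥ y) :
    d ⬝ᵥ B *ᵥ y + y ⬝ᵥ B *ᵥ d = (y ⬝ᵥ B *ᵥ y) * (l - 2 * (w ⬝ᵥ B *ᵥ y)) := by
  subst hd
  simp only [add_dotProduct, sub_dotProduct, smul_dotProduct, mulVec_add, mulVec_sub,
    mulVec_smul, dotProduct_add, dotProduct_sub, dotProduct_smul, smul_eq_mul,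
    hB.dotProduct_mulVec_comm y w]
  linear_combination mulVec_dotProduct_mulVec_add_dotProduct_mulVec_mulVec hV y

end Matrix

section Deriv

variable {𝕜 : Type*} [NontriviallyNormedField 𝕜] {ι m : Type*} [Fintype ι]
  {f g : 𝕜 → ι → 𝕜} {f' g' : ι → 𝕜} {t : 𝕜}

theorem HasDerivAt.dotProduct (hf : HasDerivAt f f' t) (hg : HasDerivAt g g' t) :
    HasDerivAt (fun s => f s ⬝ᵥ g s) (f' ⬝ᵥ g t + f t ⬝ᵥ g') t := by
  have h := HasDerivAt.fun_sum (u := Finset.univ) fun i _ =>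
    (hasDerivAt_pi.1 hf i).mul (hasDerivAt_pi.1 hg i)
  rwa [Finset.sum_add_distrib] at h

theorem HasDerivAt.mulVec (B : Matrix m ι 𝕜) (hf : HasDerivAt f f' t) :
    HasDerivAt (fun s => B *ᵥ f s) (B *ᵥ f') t :=
  hasDerivAt_pi.2 fun i => (hasDerivAt_const t (B i)).dotProduct hf |>.congr_deriv (by rw [zero_dotProduct, zero_add]; rfl)

end Deriv

theorem quadratic_form_ode {n : ℕ} (B : Matrix (Fin n) (Fin n) ℝ) (hB : B.IsSymm)
    (w : Fin n → ℝ) (l : ℝ) (v : Fin n → Fin n → ℝ)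
    (hV : (Matrix.of v).transpose * B + B * (Matrix.of v) = l • B)
    (A : Fin n → Matrix (Fin n) (Fin n) ℝ)
    (hA : ∀ i, A i = w i • B - B * Matrix.vecMulVec w (Pi.single i 1)
      - Matrix.vecMulVec (Pi.single i 1) w * B)
    (x : ℝ → Fin n → ℝ)
    (hx : ∀ t, ∀ i, HasDerivAt (fun s => x s i)
      (x t ⬝ᵥ (A i).mulVec (x t) + v i ⬝ᵥ x t) t) :
    ∀ t, HasDerivAt (fun s => x s ⬝ᵥ B.mulVec (x s))
      ((x t ⬝ᵥ B.mulVec (x t)) * (l - 2 * (w ⬝ᵥ B.mulVec (x t)))) t := by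
  intro t
  have hfield : (fun i => x t ⬝ᵥ A i *ᵥ x t + v i ⬝ᵥ x t)
      = (x t ⬝ᵥ B *ᵥ x t) • w - (2 * (w ⬝ᵥ B *ᵥ x t)) • x t + Matrix.of v *ᵥ x t := by
    funext i
    rw [hA, hB.dotProduct_mulVec_smul_sub_mul_vecMulVec_sub_vecMulVec_mul]
    rfl
  have hxt := hasDerivAt_pi.2 (hx t)
  rw [← hB.dotProduct_mulVec_add_dotProduct_mulVec_eq hV w (x t) hfield]
  exact hxt.dotProduct (hxt.mulVec B)
end

section
/- If y₁, y₂ : ℝ → ℝ satisfy ẏ₁ = 2y₂ and ẏ₂ = y₁ + y₂ + 1/2, and q(t) := 2y₁(t)² + 2y₁(t)y₂(t) - 8y₂(t)² (i.e., yᵀBy for B = [[2,1],[1,-4]]) is nonzero on an interval, then x₁ := y₁/(yᵀBy) and x₂ := y₂/(yᵀBy) satisfy ẋ₁ = -x₁² + 4x₁x₂ - x₁ + 2x₂ and ẋ₂ = x₁² + 2x₂² + x₁ on that interval. -/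
/-!
Along the flow the quadratic form `q = 2y₁² + 2y₁y₂ - 4y₂²` satisfies `q' = q + y₁ - 4y₂`,
so the quotient rule gives `x' = y'/q - x · q'/q` with `q'/q = 1 + x₁ - 4x₂`. For `x₁` this is
already the claim; for `x₂` the constant term `1/(2q)` of `y₂'/q` is rewritten through
`1/q = q/q² = 2x₁² + 2x₁x₂ - 4x₂²`.
-/

theorem hasDerivAt_quadForm_of_flow {y₁ y₂ : ℝ → ℝ} {t : ℝ}
    (h₁ : HasDerivAt y₁ (2 * y₂ t) t) (h₂ : HasDerivAt y₂ (y₁ t + y₂ t + 1/2) t) :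
    HasDerivAt (fun s => 2 * y₁ s ^ 2 + 2 * y₁ s * y₂ s - 4 * y₂ s ^ 2)
      (2 * y₁ t ^ 2 + 2 * y₁ t * y₂ t - 4 * y₂ t ^ 2 + y₁ t - 4 * y₂ t) t :=
  ((((h₁.fun_pow 2).const_mul 2).fun_add ((h₁.const_mul 2).fun_mul h₂)).fun_sub
    ((h₂.fun_pow 2).const_mul 4)).congr_deriv (by push_cast; ring)

theorem example2d_solution_general (I : Set ℝ)
    (y₁ y₂ : ℝ → ℝ)
    (h₁ : ∀ t ∈ I, HasDerivAt y₁ (2 * y₂ t) t)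
    (h₂ : ∀ t ∈ I, HasDerivAt y₂ (y₁ t + y₂ t + 1/2) t)
    (q : ℝ → ℝ)
    (hq : ∀ t, q t = 2 * (y₁ t) ^ 2 + 2 * y₁ t * y₂ t - 4 * (y₂ t) ^ 2)
    (hq0 : ∀ t ∈ I, q t ≠ 0)
    (x₁ x₂ : ℝ → ℝ)
    (hx₁ : ∀ t, x₁ t = y₁ t / q t) (hx₂ : ∀ t, x₂ t = y₂ t / q t) :
    (∀ t ∈ I, HasDerivAt x₁ (-(x₁ t) ^ 2 + 4 * x₁ t * x₂ t - x₁ t + 2 * x₂ t) t) ∧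
    (∀ t ∈ I, HasDerivAt x₂ ((x₁ t) ^ 2 + 2 * (x₂ t) ^ 2 + x₁ t) t) := by
  have hq' : ∀ t ∈ I, HasDerivAt q (q t + y₁ t - 4 * y₂ t) t := fun t ht => by
    rw [funext hq]
    exact hasDerivAt_quadForm_of_flow (h₁ t ht) (h₂ t ht)
  rw [funext hx₁, funext hx₂]
  refine ⟨fun t ht => ?_, fun t ht => ?_⟩
  · refine ((h₁ t ht).div (hq' t ht) (hq0 t ht)).congr_deriv ?_
    field_simp
    ring
  · refine ((h₂ t ht).div (hq' t ht) (hq0 t ht)).congr_deriv ?_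
    field_simp
    rw [hq t]
    ring

theorem example2d_solution (I : Set ℝ) (hI : IsOpen I)
    (y₁ y₂ : ℝ → ℝ)
    (h₁ : ∀ t ∈ I, HasDerivAt y₁ (2 * y₂ t) t)
    (h₂ : ∀ t ∈ I, HasDerivAt y₂ (y₁ t + y₂ t + 1/2) t)
    (q : ℝ → ℝ)
    (hq : ∀ t, q t = 2 * (y₁ t) ^ 2 + 2 * y₁ t * y₂ t - 4 * (y₂ t) ^ 2)
    (hq0 : ∀ t ∈ I, q t ≠ 0)
    (x₁ x₂ : ℝ → ℝ)
    (hx₁ : ∀ t, x₁ t = y₁ t / q t) (hx₂ : ∀ t, x₂ t = y₂ t / q t) :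
    (∀ t ∈ I, HasDerivAt x₁ (-(x₁ t) ^ 2 + 4 * x₁ t * x₂ t - x₁ t + 2 * x₂ t) t) ∧
    (∀ t ∈ I, HasDerivAt x₂ ((x₁ t) ^ 2 + 2 * (x₂ t) ^ 2 + x₁ t) t) :=
  example2d_solution_general I y₁ y₂ h₁ h₂ q hq hq0 x₁ x₂ hx₁ hx₂
end

section
/- If Vᵀ has n linearly independent eigenvectors r₁,…,rₙ with eigenvalues s₁,…,sₙ, then every symmetric solution B of VᵀB + BV = λB is a linear combination of the matrices P_{jm} = (r_j r_mᵀ + r_m r_jᵀ)/2 over those pairs (j,m) with s_j + s_m = λ. -/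
/-!
The rank-one matrices `r j ⊗ r m` form a basis of the whole matrix space, and each is an
eigenvector of the Sylvester operator `B ↦ Vᵀ B + B V` with eigenvalue `s j + s m`. So a solution
of `Vᵀ B + B V = λ B` is a combination of those with `s j + s m = λ`, and applying the projection
`B ↦ (B + Bᵀ) / 2`, which fixes a symmetric `B`, turns each `r j ⊗ r m` into `P j m`.
-/

open Matrix

theorem Module.Basis.mem_span_image_of_apply_eq_smul {K M ι : Type*} [Field K] [AddCommGroup M]
    [Module K M] (b : Basis ι K M) {f : Module.End K M} {μ : ι → K}
    (hb : ∀ i, f (b i) = μ i • b i) {l : K} {x : M} (hx : f x = l • x) :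
    x ∈ Submodule.span K (b '' {i | μ i = l}) := by
  classical
  have repr_apply (i : ι) (y : M) : b.repr (f y) i = μ i * b.repr y i := by
    have hmaps : Finsupp.lapply i ∘ₗ b.repr.toLinearMap ∘ₗ f =
        μ i • (Finsupp.lapply i ∘ₗ b.repr.toLinearMap) :=
      b.ext fun j => by
        by_cases hij : i = j
        · subst hij; simp [hb]
        · simp [hb, Ne.symm hij]
    exact LinearMap.congr_fun hmaps y
  rw [b.mem_span_image]
  intro i hi
  have hcoord := repr_apply i x
  rw [hx, map_smul, Finsupp.smul_apply, smul_eq_mul] at hcoord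
  exact (mul_right_cancel₀ (Finsupp.mem_support_iff.mp hi) hcoord).symm

namespace Matrix

variable {K n : Type*} [Field K] [Fintype n]

theorem linearIndependent_vecMulVec [DecidableEq n] {r : n → n → K} (hr : LinearIndependent K r) :
    LinearIndependent K (fun p : n × n => vecMulVec (r p.1) (r p.2)) := by
  let R : Matrix n n K := of r
  have hR : IsUnit R := linearIndependent_rows_iff_isUnit.mp hr
  let conj : Matrix n n K →ₗ[K] Matrix n n K := LinearMap.mulLeft K Rᵀ ∘ₗ LinearMap.mulRight K R
  have hconj : Function.Injective conj := fun C D h =>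
    hR.mul_left_injective <| ((isUnit_transpose R).mpr hR).mul_right_injective <| by
      simpa [conj, Matrix.mul_assoc] using h
  have hfamily : conj ∘ stdBasis K n n = fun p : n × n => vecMulVec (r p.1) (r p.2) := by
    ext1 ⟨i, j⟩
    simp [conj, R, stdBasis_eq_single, single_eq_single_vecMulVec_single, mul_vecMulVec,
      vecMulVec_mul]
  exact hfamily ▸ (stdBasis K n n).linearIndependent.map' conj (LinearMap.ker_eq_bot.mpr hconj)

theorem transpose_mul_vecMulVec_add_vecMulVec_mul {V : Matrix n n K} {x y : n → K} {a b : K}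
    (hx : Vᵀ *ᵥ x = a • x) (hy : Vᵀ *ᵥ y = b • y) :
    Vᵀ * vecMulVec x y + vecMulVec x y * V = (a + b) • vecMulVec x y := by
  rw [mul_vecMulVec, vecMulVec_mul, ← mulVec_transpose, hx, hy, smul_vecMulVec, vecMulVec_smul,
    add_smul]

end Matrix

theorem eigenmatrix_in_span {n : ℕ} (V : Matrix (Fin n) (Fin n) ℝ)
    (r : Fin n → Fin n → ℝ) (s : Fin n → ℝ)
    (hr : LinearIndependent ℝ r)
    (heig : ∀ j, V.transpose.mulVec (r j) = s j • r j)
    (l : ℝ) (B : Matrix (Fin n) (Fin n) ℝ) (hBs : B.IsSymm)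
    (hB : V.transpose * B + B * V = l • B) :
    B ∈ Submodule.span ℝ
      ((fun p : Fin n × Fin n =>
          (1/2 : ℝ) • (Matrix.vecMulVec (r p.1) (r p.2) + Matrix.vecMulVec (r p.2) (r p.1)))
        '' {p : Fin n × Fin n | s p.1 + s p.2 = l}) := by
  let b : Module.Basis (Fin n × Fin n) ℝ (Matrix (Fin n) (Fin n) ℝ) :=
    basisOfLinearIndependentOfCardEqFinrank' _ (linearIndependent_vecMulVec hr)
      (by simp [Module.finrank_matrix])
  let sylvester : Module.End ℝ (Matrix (Fin n) (Fin n) ℝ) :=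
    LinearMap.mulLeft ℝ Vᵀ + LinearMap.mulRight ℝ V
  have hBspan : B ∈ Submodule.span ℝ
      ((fun p : Fin n × Fin n => vecMulVec (r p.1) (r p.2)) '' {p | s p.1 + s p.2 = l}) := by
    simpa [b] using b.mem_span_image_of_apply_eq_smul (f := sylvester)
      (fun p => by simpa [b, sylvester] using
        transpose_mul_vecMulVec_add_vecMulVec_mul (heig p.1) (heig p.2)) hB
  let symmetrize : Matrix (Fin n) (Fin n) ℝ →ₗ[ℝ] Matrix (Fin n) (Fin n) ℝ :=
    (1/2 : ℝ) • (LinearMap.id + (transposeLinearEquiv _ _ ℝ ℝ).toLinearMap)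
  have hBsym : symmetrize B = B := by
    change (1/2 : ℝ) • (B + Bᵀ) = B
    rw [hBs.eq]
    module
  have hsym := Submodule.apply_mem_span_image_of_mem_span symmetrize hBspan
  rw [hBsym, Set.image_image] at hsym
  simpa [symmetrize, transpose_vecMulVec] using hsym
end
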